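/- Let P be a formula-based program. Then the interpretation M_P is a model of P, i.e., for every rule A ← φ of P and every variable assignment h, ⟦A⟧^{M_P}_h ≥ ⟦φ⟧^{M_P}_h. -/

import Mathlib

/-!
Infinite-valued semantics for formula-based logic programs
(Rondogiannis–Wadge style), following Lüdecke,
"Every Formula-Based Logic Program Has a Least Infinite-Valued Model".
-/

noncomputable section

namespace ILP

attribute [local instance] Classical.propDecidable

/-- The first uncountable ordinal. -/
def omega1 : Ordinal.{0} := Ordinal.omega 1

lemma omega1_isLimit : Order.IsSuccLimit omega1 := Cardinal.isSuccLimit_omega 1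

lemma zero_lt_omega1 : (0 : Ordinal) < omega1 := omega1_isLimit.pos

lemma succ_lt_omega1 {a : Ordinal} (h : a < omega1) : a + 1 < omega1 := by
  rw [Ordinal.add_one_eq_succ]
  exact omega1_isLimit.succ_lt h

/-- Pre-truth-values: `F α`, `0`, `T α` for arbitrary ordinals `α`. -/
inductive TVPre : Type 1 where
  | F : Ordinal → TVPre
  | zero : TVPre
  | T : Ordinal → TVPre

/-- A pre-truth-value is countable if its index is a countable ordinal. -/
def TVPre.countable : TVPre → Prop
  | .F a => a < omega1
  | .zero => True
  | .T a => a < omega1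

/-- The set `W` of truth values:
`F_α` (false values) for countable `α`, `0`, and `T_α` (true values) for countable `α`. -/
def W : Type 1 := {v : TVPre // v.countable}

/-- The strict order on truth values:
`F_0 < F_1 < ... < 0 < ... < T_1 < T_0`. -/
def TVPre.lt : TVPre → TVPre → Prop
  | .F a, .F b => a < b
  | .F _, .zero => True
  | .F _, .T _ => True
  | .zero, .T _ => True
  | .T a, .T b => b < a
  | _, _ => False

instance : LT W := ⟨fun x y => TVPre.lt x.1 y.1⟩

instance : LE W := ⟨fun x y => x = y ∨ x < y⟩

lemma TVPre.lt_trans {a b c : TVPre} (hab : a.lt b) (hbc : b.lt c) : a.lt c := by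
  cases a <;> cases b <;> cases c <;> simp_all [TVPre.lt] <;>
    first | exact hab.trans hbc | exact hbc.trans hab

lemma TVPre.lt_irrefl {a : TVPre} (h : a.lt a) : False := by
  cases a <;> simp_all [TVPre.lt]

instance instLinearOrderW : LinearOrder W where
  le_refl a := Or.inl rfl
  le_trans a b c hab hbc := by
    rcases hab with rfl | hab
    · exact hbc
    rcases hbc with rfl | hbc
    · exact Or.inr hab
    · exact Or.inr (TVPre.lt_trans hab hbc)
  le_antisymm a b hab hba := by
    rcases hab with rfl | hab
    · rfl
    rcases hba with rfl | hba
    · rfl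
    exact absurd (TVPre.lt_trans hab hba) TVPre.lt_irrefl
  le_total a b := by
    obtain ⟨a1, ha⟩ := a
    obtain ⟨b1, hb⟩ := b
    have tri : a1 = b1 ∨ a1.lt b1 ∨ b1.lt a1 := by
      cases a1 <;> cases b1 <;> simp [TVPre.lt] <;> (try rename_i x y) <;>
        (try rcases lt_trichotomy x y with h | h | h) <;> tauto
    rcases tri with h | h | h
    · exact Or.inl (Or.inl (Subtype.ext h))
    · exact Or.inl (Or.inr h)
    · exact Or.inr (Or.inr h)
  lt_iff_le_not_ge a b := by
    constructor
    · intro h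
      refine ⟨Or.inr h, ?_⟩
      rintro (rfl | h')
      · exact TVPre.lt_irrefl h
      · exact TVPre.lt_irrefl (TVPre.lt_trans h h')
    · rintro ⟨rfl | h, h2⟩
      · exact absurd (Or.inl rfl) h2
      · exact h
  toDecidableLE := Classical.decRel _

/-- The false value `F_α`. -/
def WF (a : Ordinal) (h : a < omega1) : W := ⟨.F a, h⟩

/-- The true value `T_α`. -/
def WT (a : Ordinal) (h : a < omega1) : W := ⟨.T a, h⟩

/-- The undefined value `0`. -/
def WZ : W := ⟨.zero, trivial⟩

/-- `deg w < α` : the degree of `w` (which is `∞` for `0`) is less than `α`. -/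
def degLT (w : W) (α : Ordinal) : Prop :=
  match w.1 with
  | .F a => a < α
  | .zero => False
  | .T a => a < α

/-- The set of indices of true values occurring in `M`. -/
def TIdx (M : Set W) : Set Ordinal := {a | ∃ w ∈ M, w.1 = TVPre.T a}

/-- The set of indices of false values occurring in `M`. -/
def FIdx (M : Set W) : Set Ordinal := {a | ∃ w ∈ M, w.1 = TVPre.F a}

lemma mem_lt_omega1_of_TIdx {M : Set W} {a : Ordinal} (h : a ∈ TIdx M) : a < omega1 := by
  obtain ⟨w, _, hw⟩ := h
  have := w.2
  rw [hw] at this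
  exact this

lemma mem_lt_omega1_of_FIdx {M : Set W} {a : Ordinal} (h : a ∈ FIdx M) : a < omega1 := by
  obtain ⟨w, _, hw⟩ := h
  have := w.2
  rw [hw] at this
  exact this

/-- The least upper bound of a subset of `W`. -/
def Wsup (M : Set W) : W :=
  if h : (TIdx M).Nonempty then
    WT (sInf (TIdx M))
      (lt_of_le_of_lt (csInf_le' h.choose_spec) (mem_lt_omega1_of_TIdx h.choose_spec))
  else if WZ ∈ M then WZ
  else if h2 : sSup (FIdx M) < omega1 then WF (sSup (FIdx M)) h2
  else WZ

/-- The greatest lower bound of a subset of `W`. -/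
def Winf (M : Set W) : W :=
  if h : (FIdx M).Nonempty then
    WF (sInf (FIdx M))
      (lt_of_le_of_lt (csInf_le' h.choose_spec) (mem_lt_omega1_of_FIdx h.choose_spec))
  else if WZ ∈ M then WZ
  else if h2 : sSup (TIdx M) < omega1 then WT (sSup (TIdx M)) h2
  else WZ

/-- The semantics of negation on `W`. -/
def Wneg : W → W
  | ⟨.F a, h⟩ => WT (a + 1) (succ_lt_omega1 h)
  | ⟨.zero, _⟩ => WZ
  | ⟨.T a, h⟩ => WF (a + 1) (succ_lt_omega1 h)

/-! ### Syntax -/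

/-- A first-order language with finitely many predicate symbols (at least one),
finitely many function symbols and finitely many constants (at least one). -/
structure Language where
  nPred : ℕ
  predAr : Fin nPred → ℕ
  nFun : ℕ
  funAr : Fin nFun → ℕ
  nConst : ℕ
  npos : 1 ≤ nPred
  cpos : 1 ≤ nConst

variable {L : Language}

/-- Terms of the language; variables are indexed by natural numbers. -/
inductive Term (L : Language) : Type where
  | var : ℕ → Term L
  | const : Fin L.nConst → Term L
  | func : (f : Fin L.nFun) → (Fin (L.funAr f) → Term L) → Term L

/-- A term is ground if it contains no variables. -/
def Term.ground : Term L → Prop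
  | .var _ => False
  | .const _ => True
  | .func _ ts => ∀ i, (ts i).ground

/-- The Herbrand universe: the set of ground terms. -/
def HU (L : Language) : Type := {t : Term L // t.ground}

/-- Formulas of the language. -/
inductive Formula (L : Language) : Type where
  | verum : Formula L
  | falsum : Formula L
  | atom : (p : Fin L.nPred) → (Fin (L.predAr p) → Term L) → Formula L
  | neg : Formula L → Formula L
  | conj : Formula L → Formula L → Formula L
  | disj : Formula L → Formula L → Formula L
  | all : ℕ → Formula L → Formula L
  | ex : ℕ → Formula L → Formula L

/-- A ground atom: a predicate symbol applied to ground terms.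
The Herbrand base `H_B` is the type of ground atoms. -/
structure GroundAtom (L : Language) : Type where
  pred : Fin L.nPred
  args : Fin (L.predAr pred) → HU L

/-- An (infinite-valued Herbrand) interpretation. -/
def Interp (L : Language) : Type 1 := GroundAtom L → W

/-- Evaluation of a term under a variable assignment. -/
def Term.evalT (h : ℕ → HU L) : Term L → HU L
  | .var n => h n
  | .const c => ⟨.const c, trivial⟩
  | .func f ts => ⟨.func f fun i => ((ts i).evalT h).1, fun i => ((ts i).evalT h).2⟩

/-- The infinite-valued semantics of formulas, relative to an interpretation and
a variable assignment. -/
def Formula.eval (I : Interp L) : Formula L → (ℕ → HU L) → W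
  | .verum, _ => WT 0 zero_lt_omega1
  | .falsum, _ => WF 0 zero_lt_omega1
  | .atom p ts, h => I ⟨p, fun i => (ts i).evalT h⟩
  | .neg φ, h => Wneg (φ.eval I h)
  | .conj φ ψ, h => min (φ.eval I h) (ψ.eval I h)
  | .disj φ ψ, h => max (φ.eval I h) (ψ.eval I h)
  | .ex v φ, h => Wsup (Set.range fun u : HU L => φ.eval I (Function.update h v u))
  | .all v φ, h => Winf (Set.range fun u : HU L => φ.eval I (Function.update h v u))

/-- The variables occurring in a term. -/
def Term.vars : Term L → Set ℕ
  | .var n => {n}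
  | .const _ => ∅
  | .func _ ts => ⋃ i, (ts i).vars

/-- The free variables of a formula. -/
def Formula.freeVars : Formula L → Set ℕ
  | .verum => ∅
  | .falsum => ∅
  | .atom _ ts => ⋃ i, (ts i).vars
  | .neg φ => φ.freeVars
  | .conj φ ψ => φ.freeVars ∪ ψ.freeVars
  | .disj φ ψ => φ.freeVars ∪ ψ.freeVars
  | .all v φ => φ.freeVars \ {v}
  | .ex v φ => φ.freeVars \ {v}

/-- Applying a substitution to a term. -/
def Term.subst (σ : ℕ → Term L) : Term L → Term L
  | .var n => σ n
  | .const c => .const c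
  | .func f ts => .func f fun i => (ts i).subst σ

/-- Applying a substitution to a formula (bound variables are not substituted). -/
def Formula.subst (σ : ℕ → Term L) : Formula L → Formula L
  | .verum => .verum
  | .falsum => .falsum
  | .atom p ts => .atom p fun i => (ts i).subst σ
  | .neg φ => .neg (φ.subst σ)
  | .conj φ ψ => .conj (φ.subst σ) (ψ.subst σ)
  | .disj φ ψ => .disj (φ.subst σ) (ψ.subst σ)
  | .all v φ => .all v (φ.subst (Function.update σ v (Term.var v)))
  | .ex v φ => .ex v (φ.subst (Function.update σ v (Term.var v)))

/-- A formula-based rule `A ← φ`: the head is an atom `P(t₁,…,tₛ)`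
(hence distinct from `⊤` and `⊥`) and the body is an arbitrary formula. -/
structure Rule (L : Language) : Type where
  headPred : Fin L.nPred
  headArgs : Fin (L.predAr headPred) → Term L
  body : Formula L

/-- The head of a rule, as an atomic formula. -/
def Rule.headAtom (r : Rule L) : Formula L := .atom r.headPred r.headArgs

/-- A formula-based logic program: a finite set of formula-based rules. -/
structure Program (L : Language) : Type where
  rules : Set (Rule L)
  finite : rules.Finite

/-- The set `P_G` of ground instances of a program `P`: pairs `(Aσ, φσ)` obtained
from a rule `A ← φ` of `P` and a substitution `σ` such that `Aσ` is a ground atom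
and `φσ` has no free variables. -/
def groundInstances (P : Program L) : Set (GroundAtom L × Formula L) :=
  {Aφ | ∃ r ∈ P.rules, ∃ σ : ℕ → Term L,
    (∃ hg : ∀ i, ((r.headArgs i).subst σ).ground,
      Aφ.1 = ⟨r.headPred, fun i => ⟨(r.headArgs i).subst σ, hg i⟩⟩) ∧
    Aφ.2 = r.body.subst σ ∧ (r.body.subst σ).freeVars = ∅}

/-- A default variable assignment (possible since there is at least one constant). -/
def defaultAssignment (L : Language) : ℕ → HU L :=
  fun _ => ⟨.const ⟨0, L.cpos⟩, trivial⟩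

/-- The value of a closed formula (independent of the variable assignment). -/
def Formula.evalClosed (I : Interp L) (φ : Formula L) : W :=
  φ.eval I (defaultAssignment L)

/-- The immediate consequence operator `T_P`. -/
def TP (P : Program L) (I : Interp L) : Interp L :=
  fun A => Wsup {w | ∃ φ : Formula L, (A, φ) ∈ groundInstances P ∧ w = φ.evalClosed I}

/-- `I ∥ F_β` : the set of ground atoms receiving value `F_β` under `I`. -/
def Ifalse (I : Interp L) (β : Ordinal) : Set (GroundAtom L) := {A | (I A).1 = TVPre.F β}

/-- `I ∥ T_β` : the set of ground atoms receiving value `T_β` under `I`. -/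
def Itrue (I : Interp L) (β : Ordinal) : Set (GroundAtom L) := {A | (I A).1 = TVPre.T β}

/-- `I =_α J`. -/
def eqa (α : Ordinal) (I J : Interp L) : Prop :=
  ∀ β ≤ α, Ifalse I β = Ifalse J β ∧ Itrue I β = Itrue J β

/-- `I ⊑_α J`. -/
def sqa (α : Ordinal) (I J : Interp L) : Prop :=
  (∀ β < α, eqa β I J) ∧ Ifalse J α ⊆ Ifalse I α ∧ Itrue I α ⊆ Itrue J α

/-- `I ⊏_α J`. -/
def sqlt (α : Ordinal) (I J : Interp L) : Prop := sqa α I J ∧ ¬ eqa α I J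

/-- `I ⊑_∞ J`. -/
def sqinf (I J : Interp L) : Prop := I = J ∨ ∃ α < omega1, sqlt α I J

/-- `I` satisfies the rule `A ← φ`. -/
def satisfies (I : Interp L) (r : Rule L) : Prop :=
  ∀ h : ℕ → HU L, r.body.eval I h ≤ r.headAtom.eval I h

/-- `I` is a model of `P`. -/
def isModel (I : Interp L) (P : Program L) : Prop := ∀ r ∈ P.rules, satisfies I r

/-- The transfinite iterates `T^β_{P,α}(I)`. -/
def iter (P : Program L) (α : Ordinal) (hα : α < omega1) (I : Interp L)
    (β : Ordinal) : Interp L :=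
  Ordinal.limitRecOn β I (fun _ J => TP P J)
    (fun β _ ih A =>
      if degLT (I A) α then I A
      else if ∃ γ, ∃ hγ : γ < β, (ih γ hγ A).1 = TVPre.T α then WT α hα
      else if ∀ γ, ∀ hγ : γ < β, (ih γ hγ A).1 = TVPre.F α then WF α hα
      else WF (α + 1) (succ_lt_omega1 hα))

/-- The union `⊔_{γ<α} I_γ` of a family of interpretations. -/
def unionInterp (α : Ordinal) (hα : α < omega1) (Ig : ∀ γ, γ < α → Interp L) :
    Interp L := fun A =>
  if h : ∃ ζ, ∃ hζ : ζ < α, ((Ig ζ hζ) A).1 = TVPre.F ζ ∨ ((Ig ζ hζ) A).1 = TVPre.T ζ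
  then Ig h.choose h.choose_spec.choose A
  else WF α hα

/-- The approximants `M_α` of a program `P`. -/
def approx (P : Program L) (α : Ordinal) : Interp L :=
  if hα : α < omega1 then
    if (∀ γ, ∀ _ : γ < α, ∀ ζ, ζ < γ → eqa ζ (approx P ζ) (approx P γ)) ∧
        sqa α (unionInterp α hα fun γ _ => approx P γ)
          (TP P (unionInterp α hα fun γ _ => approx P γ))
    then iter P α hα (unionInterp α hα fun γ _ => approx P γ) omega1
    else fun _ => WF 0 zero_lt_omega1
  else fun _ => WF 0 zero_lt_omega1
termination_by α
decreasing_by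
  all_goals first | assumption | exact lt_trans ‹_› ‹_›

/-- The depth `δ_P` of a program `P`. -/
def depth (P : Program L) : Ordinal :=
  sInf {δ | δ < omega1 ∧ ∀ γ, δ ≤ γ → γ < omega1 →
    Ifalse (approx P γ) γ = ∅ ∧ Itrue (approx P γ) γ = ∅}

/-- The least infinite-valued model `M_P` of a program `P`. -/
def MP (P : Program L) : Interp L := fun A =>
  if degLT (approx P (depth P) A) (depth P) then approx P (depth P) A else WZ

/-! ### Three-valued semantics -/

/-- The three truth values `F < 0 < T`. -/
inductive TV3 : Type where
  | F : TV3
  | Z : TV3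
  | T : TV3
deriving DecidableEq

/-- Numeric coding of the three truth values. -/
def TV3.toNat : TV3 → ℕ
  | .F => 0
  | .Z => 1
  | .T => 2

instance : LinearOrder TV3 :=
  LinearOrder.lift' TV3.toNat (fun a b => by
    cases a <;> cases b <;> simp [TV3.toNat])

/-- A three-valued interpretation. -/
def Interp3 (L : Language) : Type := GroundAtom L → TV3

/-- Supremum of a set of three-valued truth values. -/
def sup3 (S : Set TV3) : TV3 :=
  if TV3.T ∈ S then .T else if TV3.Z ∈ S then .Z else .F

/-- Infimum of a set of three-valued truth values. -/
def inf3 (S : Set TV3) : TV3 :=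
  if TV3.F ∈ S then .F else if TV3.Z ∈ S then .Z else .T

/-- Three-valued negation. -/
def neg3 : TV3 → TV3
  | .F => .T
  | .Z => .Z
  | .T => .F

/-- The three-valued semantics of formulas. -/
def Formula.eval3 (K : Interp3 L) : Formula L → (ℕ → HU L) → TV3
  | .verum, _ => .T
  | .falsum, _ => .F
  | .atom p ts, h => K ⟨p, fun i => (ts i).evalT h⟩
  | .neg φ, h => neg3 (φ.eval3 K h)
  | .conj φ ψ, h => min (φ.eval3 K h) (ψ.eval3 K h)
  | .disj φ ψ, h => max (φ.eval3 K h) (ψ.eval3 K h)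
  | .ex v φ, h => sup3 (Set.range fun u : HU L => φ.eval3 K (Function.update h v u))
  | .all v φ, h => inf3 (Set.range fun u : HU L => φ.eval3 K (Function.update h v u))

/-- Collapsing all false values to `F` and all true values to `T`. -/
def collapse : W → TV3 := fun w =>
  match w.1 with
  | .F _ => .F
  | .zero => .Z
  | .T _ => .T

/-- The collapse of an infinite-valued interpretation. -/
def collapseI (I : Interp L) : Interp3 L := fun A => collapse (I A)

/-- `K` is a three-valued model of `P`. -/
def isModel3 (K : Interp3 L) (P : Program L) : Prop :=
  ∀ r ∈ P.rules, ∀ h : ℕ → HU L, r.body.eval3 K h ≤ r.headAtom.eval3 K h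

/-- The three-valued interpretation `M_{P,3}`. -/
def MP3 (P : Program L) : Interp3 L := collapseI (MP P)

/-- The negation degree of a formula. -/
def Formula.negDeg : Formula L → ℕ
  | .verum => 0
  | .falsum => 0
  | .atom _ _ => 0
  | .neg φ => φ.negDeg + 1
  | .conj φ ψ => max φ.negDeg ψ.negDeg
  | .disj φ ψ => max φ.negDeg ψ.negDeg
  | .all _ φ => φ.negDeg
  | .ex _ φ => φ.negDeg


/-!
Write `clip α w` for `w` when `deg w ≤ α` and for `0` otherwise. Then `I =_α J` says exactly that
`clip α ∘ I = clip α ∘ J`, and `I ⊑_α J` that `clip β ∘ I = clip β ∘ J` for `β < α` and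
`clip α ∘ I ≤ clip α ∘ J`. Since `clip α` is monotone and commutes with suprema and infima, and
negation raises degrees, formula evaluation and `T_P` respect `=_α` and are monotone for `⊑_α`.

Hence, when `I ⊑_α T_P(I)`, the iterates `T^β_{P,α}(I)` form a `⊑_α`-chain; as `H_B` is countable,
it is stationary up to level `α` from some countable stage on, so `T^{ω₁}_{P,α}(I)` is a fixed point
of `T_P` up to level `α`. By induction on `α`, every approximant `M_α` is such a fixed point and
`M_ζ =_ζ M_α` for `ζ < α`; in particular the guard in the definition of `M_α` always holds. From
the depth on no atom gets a value of degree `α` in `M_α`, so `M_P =_e M_e` for every countable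
`e ≥ δ_P`. Thus `T_P(M_P)` and `M_P` agree up to all these levels, which forces
`T_P(M_P) = M_P`, and a fixed point of `T_P` is a model.
-/

/-- The degree of a truth value; the paper's `deg 0 = ∞` is encoded as `ω₁`, which exceeds every
other degree. -/
def deg (w : W) : Ordinal :=
  match w.1 with
  | .F a => a
  | .zero => omega1
  | .T a => a

@[elab_as_elim]
lemma W.induction {p : W → Prop} (F : ∀ a h, p (WF a h)) (Z : p WZ) (T : ∀ a h, p (WT a h))
    (w : W) : p w := by
  obtain ⟨_ | _ | a, h⟩ := w
  exacts [F _ h, Z, T _ h]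

section Values

variable {a b α : Ordinal} {ha : a < omega1} {hb : b < omega1} {v w : W}

@[simp] lemma WF_val : (WF a ha).1 = .F a := rfl
@[simp] lemma WZ_val : WZ.1 = .zero := rfl
@[simp] lemma WT_val : (WT a ha).1 = .T a := rfl

lemma W.val_inj : v.1 = w.1 ↔ v = w := Subtype.val_inj

@[simp] lemma deg_WF : deg (WF a ha) = a := rfl
@[simp] lemma deg_WZ : deg WZ = omega1 := rfl
@[simp] lemma deg_WT : deg (WT a ha) = a := rfl

@[simp] lemma WF_inj : WF a ha = WF b hb ↔ a = b := by simp [← W.val_inj]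
@[simp] lemma WT_inj : WT a ha = WT b hb ↔ a = b := by simp [← W.val_inj]
@[simp] lemma WT_ne_WZ : WT a ha ≠ WZ := by simp [← W.val_inj]
@[simp] lemma WF_lt_WF : WF a ha < WF b hb ↔ a < b := Iff.rfl
@[simp] lemma WT_lt_WT : WT a ha < WT b hb ↔ b < a := Iff.rfl
@[simp] lemma WF_lt_WZ : WF a ha < WZ := trivial
@[simp] lemma WF_lt_WT : WF a ha < WT b hb := trivial
@[simp] lemma WZ_lt_WT : WZ < WT a ha := trivial

@[simp] lemma WF_le_WF : WF a ha ≤ WF b hb ↔ a ≤ b := by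
  rw [le_iff_eq_or_lt, le_iff_eq_or_lt, WF_inj, WF_lt_WF]
@[simp] lemma WT_le_WT : WT a ha ≤ WT b hb ↔ b ≤ a := by
  rw [le_iff_eq_or_lt, le_iff_eq_or_lt, WT_inj, WT_lt_WT, eq_comm]
@[simp] lemma WF_le_WZ : WF a ha ≤ WZ := WF_lt_WZ.le
@[simp] lemma WF_le_WT : WF a ha ≤ WT b hb := WF_lt_WT.le
@[simp] lemma WZ_le_WT : WZ ≤ WT a ha := WZ_lt_WT.le
@[simp] lemma not_WZ_le_WF : ¬ WZ ≤ WF a ha := not_le.2 WF_lt_WZ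
@[simp] lemma not_WT_le_WF : ¬ WT a ha ≤ WF b hb := not_le.2 WF_lt_WT
@[simp] lemma not_WT_le_WZ : ¬ WT a ha ≤ WZ := not_le.2 WZ_lt_WT
@[simp] lemma not_WT_lt_WZ : ¬ WT a ha < WZ := not_lt.2 WZ_le_WT

lemma deg_le_omega1 (w : W) : deg w ≤ omega1 := by
  induction w using W.induction <;> simp [le_of_lt, *]

lemma deg_eq_omega1_iff : deg w = omega1 ↔ w = WZ := by
  induction w using W.induction <;> simp [ne_of_lt, *]

lemma degLT_iff (hα : α ≤ omega1) : degLT w α ↔ deg w < α := by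
  induction w using W.induction <;> simp [degLT, hα.not_gt]

lemma le_deg_of_not_degLT (hα : α ≤ omega1) (h : ¬ degLT w α) : α ≤ deg w :=
  not_lt.1 ((degLT_iff hα).not.1 h)

lemma W.val_eq_F_iff : w.1 = .F a ↔ ∃ h, w = WF a h := by
  refine ⟨fun h => ⟨?_, W.val_inj.1 h⟩, fun ⟨_, h⟩ => h ▸ rfl⟩
  have := w.2
  rwa [h] at this

lemma W.val_eq_T_iff : w.1 = .T a ↔ ∃ h, w = WT a h := by
  refine ⟨fun h => ⟨?_, W.val_inj.1 h⟩, fun ⟨_, h⟩ => h ▸ rfl⟩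
  have := w.2
  rwa [h] at this

lemma deg_eq_of_val_eq_F (h : w.1 = .F a) : deg w = a := by
  unfold deg; rw [h]

lemma deg_eq_of_val_eq_T (h : w.1 = .T a) : deg w = a := by
  unfold deg; rw [h]

lemma W.val_eq_F_or_T_iff (ha : a < omega1) :
    w.1 = .F a ∨ w.1 = .T a ↔ deg w = a := by
  induction w using W.induction <;> simp [ha.ne']

end Values

section Clip

variable {α β : Ordinal} {v w : W}

def clip (α : Ordinal) (w : W) : W := if deg w ≤ α then w else WZ

lemma clip_of_deg_le (h : deg w ≤ α) : clip α w = w := if_pos h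

lemma clip_of_lt_deg (h : α < deg w) : clip α w = WZ := if_neg h.not_ge

lemma clip_mono (α : Ordinal) : Monotone (clip α) := by
  intro v w hvw
  unfold clip
  split_ifs with hv hw hw <;> induction v using W.induction <;> induction w using W.induction <;>
    simp_all
  all_goals order

lemma ne_WZ_of_deg_le_of_lt_deg (hv : deg v ≤ α) (hw : α < deg w) : v ≠ WZ := by
  rintro rfl
  exact (hw.trans_le (deg_le_omega1 w)).not_ge hv

lemma clip_eq_clip_iff : clip α v = clip α w ↔ v = w ∨ α < deg v ∧ α < deg w := by
  rcases le_or_gt (deg v) α with hv | hv <;> rcases le_or_gt (deg w) α with hw | hw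
  · simp [clip_of_deg_le hv, clip_of_deg_le hw, hv.not_gt]
  · simp [clip_of_deg_le hv, clip_of_lt_deg hw, ne_WZ_of_deg_le_of_lt_deg hv hw, hv.not_gt]
    exact fun h => (h ▸ hw).not_ge hv
  · simp [clip_of_deg_le hw, clip_of_lt_deg hv, (ne_WZ_of_deg_le_of_lt_deg hw hv).symm,
      hw.not_gt]
    exact fun h => (h ▸ hv).not_ge hw
  · simp [clip_of_lt_deg hv, clip_of_lt_deg hw, hv, hw]

lemma clip_eq_clip_of_le (hβ : β ≤ α) (h : clip α v = clip α w) : clip β v = clip β w := by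
  rw [clip_eq_clip_iff] at h ⊢
  exact h.imp_right fun ⟨hv, hw⟩ => ⟨hβ.trans_lt hv, hβ.trans_lt hw⟩

lemma eq_of_clip_eq_of_deg_le (h : clip α v = clip α w) (hv : deg v ≤ α) : v = w :=
  (clip_eq_clip_iff.1 h).resolve_right fun h => h.1.not_ge hv

lemma eq_or_le_deg_of_clip_eq (h : ∀ β < α, clip β v = clip β w) :
    v = w ∨ α ≤ deg v ∧ α ≤ deg w := by
  by_cases hv : deg v < α
  · exact Or.inl (eq_of_clip_eq_of_deg_le (h _ hv) le_rfl)
  by_cases hw : deg w < α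
  · exact Or.inl (eq_of_clip_eq_of_deg_le (h _ hw).symm le_rfl).symm
  exact Or.inr ⟨not_lt.1 hv, not_lt.1 hw⟩

end Clip

def W.dual : W → W
  | ⟨.F a, h⟩ => ⟨.T a, h⟩
  | ⟨.zero, h⟩ => ⟨.zero, h⟩
  | ⟨.T a, h⟩ => ⟨.F a, h⟩

section Lattice

variable {a α : Ordinal} {ha : a < omega1} {M : Set W} {s v w : W}

@[simp] lemma W.dual_WF : (WF a ha).dual = WT a ha := rfl
@[simp] lemma W.dual_WZ : WZ.dual = WZ := rfl
@[simp] lemma W.dual_WT : (WT a ha).dual = WF a ha := rfl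

@[simp] lemma W.dual_dual (w : W) : w.dual.dual = w := by
  induction w using W.induction <;> rfl

@[simp] lemma W.dual_le_dual : v.dual ≤ w.dual ↔ w ≤ v := by
  induction v using W.induction <;> induction w using W.induction <;> simp

@[simp] lemma W.dual_val_eq_T : w.dual.1 = .T a ↔ w.1 = .F a := by
  induction w using W.induction <;> simp

@[simp] lemma W.dual_val_eq_F : w.dual.1 = .F a ↔ w.1 = .T a := by
  induction w using W.induction <;> simp

@[simp] lemma W.dual_eq_WZ : w.dual = WZ ↔ w = WZ :=
  ⟨fun h => by rw [← W.dual_dual w, h, W.dual_WZ], fun h => by rw [h, W.dual_WZ]⟩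

@[simp] lemma W.deg_dual (w : W) : deg w.dual = deg w := by
  induction w using W.induction <;> rfl

lemma clip_dual (w : W) : clip α w.dual = (clip α w).dual := by
  unfold clip
  split_ifs <;> simp_all

lemma isLUB_Wsup (M : Set W) : IsLUB M (Wsup M) := by
  have hFIdx : ∀ b hb, WF b hb ∈ upperBounds M → sSup (FIdx M) ≤ b := fun b hb hu =>
    csSup_le' fun a ⟨w, hw, hwa⟩ => by
      obtain ⟨_, rfl⟩ := W.val_eq_F_iff.1 hwa
      simpa using hu hw
  unfold Wsup
  split_ifs with hT hZ hF
  · obtain ⟨w₀, hw₀, hw₀T⟩ := csInf_mem hT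
    obtain ⟨_, rfl⟩ := W.val_eq_T_iff.1 hw₀T
    refine ⟨fun w hw => ?_, fun u hu => hu hw₀⟩
    induction w using W.induction <;> simp
    exact csInf_le' ⟨_, hw, rfl⟩
  · refine ⟨fun w hw => ?_, fun u hu => hu hZ⟩
    induction w using W.induction <;> simp
    exact hT ⟨_, _, hw, rfl⟩
  · refine ⟨fun w hw => ?_, fun u hu => ?_⟩
    · induction w using W.induction
      · simpa using le_csSup ⟨omega1, fun _ h => (mem_lt_omega1_of_FIdx h).le⟩ ⟨_, hw, rfl⟩
      · exact absurd hw hZ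
      · exact absurd ⟨_, _, hw, rfl⟩ hT
    · induction u using W.induction <;> simp
      exact hFIdx _ _ hu
  · refine ⟨fun w hw => ?_, fun u hu => ?_⟩
    · induction w using W.induction <;> simp
      exact hT ⟨_, _, hw, rfl⟩
    · induction u using W.induction <;> simp
      exact hF ((hFIdx _ _ hu).trans_lt ‹_›)

lemma WT_mem_of_isLUB (h : IsLUB M (WT a ha)) : WT a ha ∈ M := by
  by_contra hM
  have hub : WT (a + 1) (succ_lt_omega1 ha) ∈ upperBounds M := fun w hw => by
    have hlt := (h.1 hw).lt_of_ne fun e => hM (e ▸ hw)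
    induction w using W.induction <;> simp_all
  simpa using h.2 hub

/-- `clip α` collapses the open interval between `F_α` and `T_α` to `0`, and a supremum of the
form `T_b` is attained. -/
lemma isLUB_image_clip (h : IsLUB M s) : IsLUB (clip α '' M) (clip α s) := by
  refine ⟨(clip_mono α).mem_upperBounds_image h.1, fun u hu => ?_⟩
  rcases lt_or_ge u WZ with huZ | hZu
  · have hM : ∀ m ∈ M, ∃ c hc, m = WF c hc ∧ c ≤ α := fun m hm => by
      have hmu := (hu ⟨m, hm, rfl⟩).trans_lt huZ
      induction m using W.induction <;> unfold clip at hmu <;> split_ifs at hmu with hc <;>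
        simp_all
    have hsu : s ≤ u := h.2 fun m hm => by
      obtain ⟨c, hc, rfl, hcα⟩ := hM m hm
      have hmu := hu ⟨_, hm, rfl⟩
      rwa [clip_of_deg_le (by simpa using hcα)] at hmu
    suffices deg s ≤ α by rwa [clip_of_deg_le this]
    rcases lt_or_ge α omega1 with hα | hα
    · have hsα : s ≤ WF α hα := h.2 fun m hm => by
        obtain ⟨c, hc, rfl, hcα⟩ := hM m hm
        simpa using hcα
      induction s using W.induction <;> simp_all
    · exact (deg_le_omega1 s).trans hα
  · by_cases hsZ : clip α s ≤ WZ
    · exact hsZ.trans hZu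
    · have hs : clip α s = s := by
        unfold clip at hsZ ⊢
        split_ifs at hsZ ⊢ <;> simp_all
      induction s using W.induction <;> simp_all
      exact hu ⟨_, WT_mem_of_isLUB h, hs⟩

lemma clip_Wsup_mono {ι : Sort*} {f g : ι → W} (h : ∀ i, clip α (f i) ≤ clip α (g i)) :
    clip α (Wsup (Set.range f)) ≤ clip α (Wsup (Set.range g)) := by
  have hf := isLUB_image_clip (α := α) (isLUB_Wsup (Set.range f))
  have hg := isLUB_image_clip (α := α) (isLUB_Wsup (Set.range g))
  rw [← Set.range_comp] at hf hg
  exact hf.2 (Set.forall_mem_range.2 fun i => (h i).trans (hg.1 (Set.mem_range_self i)))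

lemma Winf_eq_dual_Wsup (M : Set W) : Winf M = (Wsup (W.dual '' M)).dual := by
  have hT : TIdx (W.dual '' M) = FIdx M := by
    simp only [TIdx, FIdx, Set.exists_mem_image, W.dual_val_eq_T]
  have hF : FIdx (W.dual '' M) = TIdx M := by
    simp only [TIdx, FIdx, Set.exists_mem_image, W.dual_val_eq_F]
  have hZ : WZ ∈ W.dual '' M ↔ WZ ∈ M := by
    simp only [Set.mem_image, W.dual_eq_WZ, exists_eq_right]
  unfold Winf Wsup
  simp only [hT, hF, hZ]
  split_ifs <;> rfl

lemma clip_Winf_mono {ι : Sort*} {f g : ι → W} (h : ∀ i, clip α (f i) ≤ clip α (g i)) :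
    clip α (Winf (Set.range f)) ≤ clip α (Winf (Set.range g)) := by
  rw [Winf_eq_dual_Wsup, Winf_eq_dual_Wsup, ← Set.range_comp, ← Set.range_comp, clip_dual,
    clip_dual, W.dual_le_dual]
  exact clip_Wsup_mono fun i => by simpa [clip_dual] using h i

end Lattice

section LeAt

variable {α β : Ordinal} {u v w : W}

/-- `v ⊑_α w` for single truth values; see `sqa_iff`. -/
def LeAt (α : Ordinal) (v w : W) : Prop :=
  (∀ β < α, clip β v = clip β w) ∧ clip α v ≤ clip α w

lemma LeAt.refl (α : Ordinal) (w : W) : LeAt α w w := ⟨fun _ _ => rfl, le_rfl⟩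

lemma LeAt.trans (h₁ : LeAt α u v) (h₂ : LeAt α v w) : LeAt α u w :=
  ⟨fun β hβ => (h₁.1 β hβ).trans (h₂.1 β hβ), h₁.2.trans h₂.2⟩

lemma LeAt.eq_of_deg_lt (h : LeAt α v w) (hv : deg v < α) : v = w :=
  eq_of_clip_eq_of_deg_le (h.1 _ hv) le_rfl

lemma LeAt.eq_or_le_deg (h : LeAt α v w) : v = w ∨ α ≤ deg v ∧ α ≤ deg w :=
  eq_or_le_deg_of_clip_eq h.1

lemma LeAt.le_deg (h : LeAt α v w) (hv : α ≤ deg v) : α ≤ deg w :=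
  h.eq_or_le_deg.elim (fun e => e ▸ hv) And.right

lemma leAt_of_le_deg (hv : α ≤ deg v) (hw : α ≤ deg w) (h : clip α v ≤ clip α w) :
    LeAt α v w :=
  ⟨fun _ hβ => by rw [clip_of_lt_deg (hβ.trans_le hv), clip_of_lt_deg (hβ.trans_le hw)], h⟩

lemma clip_eq_clip_iff_leAt : clip α v = clip α w ↔ LeAt α v w ∧ LeAt α w v :=
  ⟨fun h => ⟨⟨fun _ hβ => clip_eq_clip_of_le hβ.le h, h.le⟩,
    ⟨fun _ hβ => (clip_eq_clip_of_le hβ.le h).symm, h.ge⟩⟩,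
   fun ⟨h₁, h₂⟩ => le_antisymm h₁.2 h₂.2⟩

@[simp] lemma Wneg_WF {a : Ordinal} {ha : a < omega1} :
    Wneg (WF a ha) = WT (a + 1) (succ_lt_omega1 ha) := rfl
@[simp] lemma Wneg_WZ : Wneg WZ = WZ := rfl
@[simp] lemma Wneg_WT {a : Ordinal} {ha : a < omega1} :
    Wneg (WT a ha) = WF (a + 1) (succ_lt_omega1 ha) := rfl

lemma lt_deg_Wneg (hα : α < omega1) (h : α ≤ deg w) : α < deg (Wneg w) := by
  induction w using W.induction <;> simp_all [Order.lt_add_one_iff]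

lemma LeAt.Wneg (hα : α < omega1) (h : LeAt α v w) : LeAt α (Wneg v) (Wneg w) := by
  rcases h.eq_or_le_deg with rfl | ⟨hv, hw⟩
  · exact LeAt.refl _ _
  · have hv' := lt_deg_Wneg hα hv
    have hw' := lt_deg_Wneg hα hw
    exact leAt_of_le_deg hv'.le hw'.le (by rw [clip_of_lt_deg hv', clip_of_lt_deg hw'])

lemma LeAt.max {v₁ v₂ w₁ w₂ : W} (h₁ : LeAt α v₁ w₁) (h₂ : LeAt α v₂ w₂) :
    LeAt α (max v₁ v₂) (max w₁ w₂) := by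
  refine ⟨fun β hβ => ?_, ?_⟩ <;> simp only [(clip_mono _).map_max]
  · rw [h₁.1 β hβ, h₂.1 β hβ]
  · exact max_le_max h₁.2 h₂.2

lemma LeAt.min {v₁ v₂ w₁ w₂ : W} (h₁ : LeAt α v₁ w₁) (h₂ : LeAt α v₂ w₂) :
    LeAt α (min v₁ v₂) (min w₁ w₂) := by
  refine ⟨fun β hβ => ?_, ?_⟩ <;> simp only [(clip_mono _).map_min]
  · rw [h₁.1 β hβ, h₂.1 β hβ]
  · exact min_le_min h₁.2 h₂.2

lemma LeAt.Wsup {ι : Sort*} {f g : ι → W} (h : ∀ i, LeAt α (f i) (g i)) :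
    LeAt α (Wsup (Set.range f)) (Wsup (Set.range g)) :=
  ⟨fun β hβ => le_antisymm (clip_Wsup_mono fun i => ((h i).1 β hβ).le)
    (clip_Wsup_mono fun i => ((h i).1 β hβ).ge), clip_Wsup_mono fun i => (h i).2⟩

lemma LeAt.Winf {ι : Sort*} {f g : ι → W} (h : ∀ i, LeAt α (f i) (g i)) :
    LeAt α (Winf (Set.range f)) (Winf (Set.range g)) :=
  ⟨fun β hβ => le_antisymm (clip_Winf_mono fun i => ((h i).1 β hβ).le)
    (clip_Winf_mono fun i => ((h i).1 β hβ).ge), clip_Winf_mono fun i => (h i).2⟩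

end LeAt

section Semantics

variable {α : Ordinal} {P : Program L} {I J : Interp L}

lemma Formula.eval_leAt (hα : α < omega1) (hIJ : ∀ A, LeAt α (I A) (J A)) (φ : Formula L)
    (h : ℕ → HU L) : LeAt α (φ.eval I h) (φ.eval J h) := by
  induction φ generalizing h with
  | verum | falsum => exact LeAt.refl _ _
  | atom p ts => exact hIJ _
  | neg φ ih => exact (ih h).Wneg hα
  | conj φ ψ ihφ ihψ => exact (ihφ h).min (ihψ h)
  | disj φ ψ ihφ ihψ => exact (ihφ h).max (ihψ h)
  | all v φ ih => exact LeAt.Winf fun u => ih _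
  | ex v φ ih => exact LeAt.Wsup fun u => ih _

lemma TP_eq_Wsup_range (P : Program L) (I : Interp L) (A : GroundAtom L) :
    TP P I A =
      Wsup (Set.range fun ψ : {φ // (A, φ) ∈ groundInstances P} => ψ.1.evalClosed I) := by
  unfold TP
  congr 1
  ext w
  simp [eq_comm]

lemma evalClosed_le_TP {A : GroundAtom L} {φ : Formula L} (h : (A, φ) ∈ groundInstances P) :
    φ.evalClosed I ≤ TP P I A :=
  (isLUB_Wsup _).1 ⟨φ, h, rfl⟩

lemma TP_leAt (hα : α < omega1) (hIJ : ∀ A, LeAt α (I A) (J A)) (A : GroundAtom L) :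
    LeAt α (TP P I A) (TP P J A) := by
  rw [TP_eq_Wsup_range, TP_eq_Wsup_range]
  exact LeAt.Wsup fun ψ => Formula.eval_leAt hα hIJ ψ.1 _

lemma clip_TP_congr (hα : α < omega1) (hIJ : ∀ A, clip α (I A) = clip α (J A))
    (A : GroundAtom L) : clip α (TP P I A) = clip α (TP P J A) := by
  simp only [clip_eq_clip_iff_leAt] at hIJ ⊢
  exact ⟨TP_leAt hα (fun A => (hIJ A).1) A, TP_leAt hα (fun A => (hIJ A).2) A⟩

end Semantics

section Levels

variable {α β : Ordinal} {v w : W}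

lemma eq_of_forall_val_iff (hv : deg v ≤ α)
    (h : ∀ β ≤ α, (v.1 = .F β ↔ w.1 = .F β) ∧ (v.1 = .T β ↔ w.1 = .T β)) : v = w := by
  induction v using W.induction with
  | F a ha => exact W.val_inj.1 ((h a hv).1.1 rfl).symm
  | T a ha => exact W.val_inj.1 ((h a hv).2.1 rfl).symm
  | Z =>
    induction w using W.induction with
    | F c hc => exact absurd ((h c (hc.le.trans hv)).1.2 rfl) (by simp)
    | T c hc => exact absurd ((h c (hc.le.trans hv)).2.2 rfl) (by simp)
    | Z => rfl

lemma val_ne_of_lt_deg (hv : α < deg v) (hβ : β ≤ α) : v.1 ≠ .F β ∧ v.1 ≠ .T β :=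
  ⟨fun e => (deg_eq_of_val_eq_F e ▸ hv).not_ge hβ, fun e => (deg_eq_of_val_eq_T e ▸ hv).not_ge hβ⟩

lemma clip_eq_clip_iff_val : clip α v = clip α w ↔
    ∀ β ≤ α, (v.1 = .F β ↔ w.1 = .F β) ∧ (v.1 = .T β ↔ w.1 = .T β) := by
  constructor
  · intro h β hβ
    rcases clip_eq_clip_iff.1 h with rfl | ⟨hv, hw⟩
    · simp
    · obtain ⟨hvF, hvT⟩ := val_ne_of_lt_deg hv hβ
      obtain ⟨hwF, hwT⟩ := val_ne_of_lt_deg hw hβ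
      exact ⟨iff_of_false hvF hwF, iff_of_false hvT hwT⟩
  · intro h
    rw [clip_eq_clip_iff]
    by_cases hv : deg v ≤ α
    · exact Or.inl (eq_of_forall_val_iff hv h)
    by_cases hw : deg w ≤ α
    · exact Or.inl (eq_of_forall_val_iff hw fun β hβ => ⟨(h β hβ).1.symm, (h β hβ).2.symm⟩).symm
    exact Or.inr ⟨not_le.1 hv, not_le.1 hw⟩

lemma leAt_iff_val : LeAt α v w ↔ (∀ β < α, clip β v = clip β w) ∧
    (w.1 = .F α → v.1 = .F α) ∧ (v.1 = .T α → w.1 = .T α) := by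
  refine and_congr_right fun hlow => ?_
  rcases eq_or_le_deg_of_clip_eq hlow with rfl | ⟨hv, hw⟩
  · simp
  clear hlow
  induction v using W.induction <;> induction w using W.induction <;>
    simp only [deg_WF, deg_WT, deg_WZ] at hv hw <;>
    (try rcases hv.eq_or_lt with rfl | hv) <;> (try rcases hw.eq_or_lt with rfl | hw) <;>
    simp_all [clip, not_le_of_gt, ne_of_gt]

lemma leAt_iff_of_le_deg (hv : α ≤ deg v) (hw : α ≤ deg w) :
    LeAt α v w ↔ (w.1 = .F α → v.1 = .F α) ∧ (v.1 = .T α → w.1 = .T α) := by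
  rw [leAt_iff_val]
  exact and_iff_right fun β hβ => by
    rw [clip_of_lt_deg (hβ.trans_le hv), clip_of_lt_deg (hβ.trans_le hw)]

lemma LeAt.eq_WT {hα : α < omega1} (h : LeAt α v w) (hv : v = WT α hα) : w = WT α hα :=
  W.val_inj.1 ((leAt_iff_val.1 h).2.2 (hv ▸ rfl))

lemma LeAt.eq_WF {hα : α < omega1} (h : LeAt α v w) (hw : w = WF α hα) : v = WF α hα :=
  W.val_inj.1 ((leAt_iff_val.1 h).2.1 (hw ▸ rfl))

variable {I J : Interp L}

lemma eqa_iff : eqa α I J ↔ ∀ A, clip α (I A) = clip α (J A) := by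
  simp only [eqa, clip_eq_clip_iff_val, Set.ext_iff, Ifalse, Itrue, Set.mem_ofPred_eq,
    ← forall_and]
  exact ⟨fun h A β hβ => h β hβ A, fun h β hβ A => h A β hβ⟩

lemma sqa_iff : sqa α I J ↔ ∀ A, LeAt α (I A) (J A) := by
  simp only [sqa, leAt_iff_val, eqa_iff, Set.subset_def, Ifalse, Itrue, Set.mem_ofPred_eq,
    forall_and]
  exact ⟨fun ⟨h, hF, hT⟩ => ⟨fun A β hβ => h β hβ A, hF, hT⟩,
    fun ⟨h, hF, hT⟩ => ⟨fun β hβ A => h A β hβ, hF, hT⟩⟩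

end Levels

section Iteration

variable {P : Program L} {α : Ordinal} {hα : α < omega1} {I : Interp L}

lemma iter_zero : iter P α hα I 0 = I := Ordinal.limitRecOn_zero _ _ _

lemma iter_add_one (β : Ordinal) : iter P α hα I (β + 1) = TP P (iter P α hα I β) :=
  Ordinal.limitRecOn_add_one _ _ _ _

lemma iter_limit {β : Ordinal} (hβ : Order.IsSuccLimit β) (A : GroundAtom L) :
    iter P α hα I β A =
      if degLT (I A) α then I A
      else if ∃ γ < β, iter P α hα I γ A = WT α hα then WT α hα
      else if ∀ γ < β, iter P α hα I γ A = WF α hα then WF α hα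
      else WF (α + 1) (succ_lt_omega1 hα) := by
  unfold iter
  refine (congrFun (Ordinal.limitRecOn_limit (motive := fun _ => Interp L) _ _ _ _ hβ) A).trans ?_
  simp only [← W.val_inj, WT_val, WF_val, exists_prop]

lemma iter_limit_leAt_of_lt {β : Ordinal} (hβ : Order.IsSuccLimit β)
    (hI : ∀ γ < β, ∀ A, LeAt α (I A) (iter P α hα I γ A)) {γ : Ordinal} (hγ : γ < β)
    (A : GroundAtom L) : LeAt α (iter P α hα I γ A) (iter P α hα I β A) := by
  rw [iter_limit hβ A]
  split_ifs with hdeg hT hF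
  · rw [← (hI γ hγ A).eq_of_deg_lt ((degLT_iff hα.le).1 hdeg)]
    exact LeAt.refl _ _
  all_goals
    have hle : α ≤ deg (iter P α hα I γ A) :=
      (hI γ hγ A).le_deg (le_deg_of_not_degLT hα.le hdeg)
  · exact (leAt_iff_of_le_deg hle (by simp)).2 ⟨by simp, fun _ => rfl⟩
  · rw [hF γ hγ]
    exact LeAt.refl _ _
  · refine (leAt_iff_of_le_deg hle (by simp)).2 ⟨by simp, fun h => ?_⟩
    exact absurd ⟨γ, hγ, W.val_inj.1 h⟩ hT

lemma iter_limit_leAt_TP {β : Ordinal} (hβ : Order.IsSuccLimit β)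
    (hI : ∀ A, LeAt α (I A) (TP P I A))
    (hlt : ∀ γ < β, ∀ A, LeAt α (iter P α hα I γ A) (iter P α hα I β A))
    (hTP : ∀ γ < β, ∀ A, LeAt α (iter P α hα I γ A) (TP P (iter P α hα I γ) A))
    (A : GroundAtom L) : LeAt α (iter P α hα I β A) (TP P (iter P α hα I β) A) := by
  have hmono : ∀ γ < β, LeAt α (TP P (iter P α hα I γ) A) (TP P (iter P α hα I β) A) :=
    fun γ hγ => TP_leAt hα (hlt γ hγ) A
  have h₀ : LeAt α (I A) (TP P (iter P α hα I β) A) :=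
    (hI A).trans (by simpa [iter_zero] using hmono 0 hβ.bot_lt)
  rw [iter_limit hβ A]
  split_ifs with hdeg hT hF
  · exact h₀
  · obtain ⟨γ, hγ, hγT⟩ := hT
    rw [((hTP γ hγ A).trans (hmono γ hγ)).eq_WT hγT]
    exact LeAt.refl _ _
  · have hF₀ : I A = WF α hα := by simpa [iter_zero] using hF 0 hβ.bot_lt
    exact (leAt_iff_of_le_deg (by simp) (h₀.le_deg (by simp [hF₀]))).2 ⟨fun _ => rfl, by simp⟩
  · push Not at hF
    obtain ⟨γ, hγ, hγF⟩ := hF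
    have h := (hTP γ hγ A).trans (hmono γ hγ)
    have hle := h₀.le_deg (le_deg_of_not_degLT hα.le hdeg)
    refine (leAt_iff_of_le_deg (by simp) hle).2 ⟨fun e => ?_, by simp⟩
    exact absurd (h.eq_WF (W.val_inj.1 e)) hγF

lemma iter_chain (hI : ∀ A, LeAt α (I A) (TP P I A)) (β : Ordinal) :
    (∀ γ ≤ β, ∀ A, LeAt α (iter P α hα I γ A) (iter P α hα I β A)) ∧
      ∀ A, LeAt α (iter P α hα I β A) (TP P (iter P α hα I β) A) := by
  induction β using Ordinal.limitRecOn with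
  | zero =>
    refine ⟨fun γ hγ A => ?_, by simpa [iter_zero] using hI⟩
    rw [nonpos_iff_eq_zero.1 hγ]
    exact LeAt.refl _ _
  | add_one δ ih =>
    rw [iter_add_one]
    refine ⟨fun γ hγ A => ?_, TP_leAt hα ih.2⟩
    rcases hγ.eq_or_lt with rfl | hγ
    · rw [iter_add_one]
      exact LeAt.refl _ _
    · exact (ih.1 γ (Order.lt_add_one_iff.1 hγ) A).trans (ih.2 A)
  | limit β hβ ih =>
    have hlt : ∀ γ < β, ∀ A, LeAt α (iter P α hα I γ A) (iter P α hα I β A) :=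
      fun γ hγ => iter_limit_leAt_of_lt hβ
        (fun γ hγ A => by simpa [iter_zero] using (ih γ hγ).1 0 zero_le A) hγ
    refine ⟨fun γ hγ A => ?_, iter_limit_leAt_TP hβ hI hlt fun γ hγ => (ih γ hγ).2⟩
    rcases hγ.eq_or_lt with rfl | hγ
    · exact LeAt.refl _ _
    · exact hlt γ hγ A

end Iteration

section Countability

def Term.code : Term L → ℕ
  | .var n => Nat.pair 0 n
  | .const c => Nat.pair 1 c
  | .func f ts =>
    Nat.pair 2 (Nat.pair f (Encodable.encode (List.ofFn fun i => (ts i).code)))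

lemma Term.code_injective : Function.Injective (Term.code (L := L)) := by
  intro t₁ t₂ h
  induction t₁ generalizing t₂ with
  | var n => cases t₂ <;> simp_all [Term.code]
  | const c => cases t₂ <;> simp_all [Term.code, Fin.val_inj]
  | func f ts ih =>
    cases t₂ with
    | func g us =>
      simp only [Term.code, Nat.pair_eq_pair] at h
      obtain ⟨-, hfg, hts⟩ := h
      obtain rfl := Fin.ext hfg
      have := List.ofFn_inj.1 (Encodable.encode_injective hts)
      rw [funext fun i => ih i (congrFun this i)]
    | _ => simp [Term.code, Nat.pair_eq_pair] at h

instance : Countable (Term L) := Term.code_injective.countable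

instance : Countable (HU L) := Subtype.countable

instance : Countable (GroundAtom L) :=
  Countable.of_equiv (Σ p : Fin L.nPred, Fin (L.predAr p) → HU L)
    { toFun := fun x => ⟨x.1, x.2⟩, invFun := fun A => ⟨A.pred, A.args⟩,
      left_inv := fun _ => rfl, right_inv := fun _ => rfl }

lemma exists_lt_omega1_of_countable {ι : Type} [Countable ι] {p : ι → Ordinal → Prop}
    (h : ∀ i, ∃ δ < omega1, ∀ γ, δ ≤ γ → γ < omega1 → p i γ) :
    ∃ δ < omega1, ∀ γ, δ ≤ γ → γ < omega1 → ∀ i, p i γ := by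
  choose δ hδ hp using h
  exact ⟨⨆ i, δ i, Ordinal.iSup_lt_omega_one hδ,
    fun γ hγ hγ' i => hp i γ ((Ordinal.le_iSup δ i).trans hγ) hγ'⟩

end Countability

section Stabilization

variable {P : Program L} {α : Ordinal} {hα : α < omega1} {I : Interp L}

lemma exists_iter_stable (hI : ∀ A, LeAt α (I A) (TP P I A)) (A : GroundAtom L) :
    ∃ δ < omega1, ∀ γ, δ ≤ γ → γ < omega1 →
      clip α (iter P α hα I γ A) = clip α (iter P α hα I omega1 A) := by
  have hchain := iter_chain (hα := hα) hI
  have h₀ : ∀ γ, LeAt α (I A) (iter P α hα I γ A) := fun γ => by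
    simpa [iter_zero] using (hchain γ).1 0 zero_le A
  suffices ∃ δ < omega1, ∀ γ, δ ≤ γ → γ < omega1 →
      LeAt α (iter P α hα I omega1 A) (iter P α hα I γ A) by
    obtain ⟨δ, hδ, h⟩ := this
    exact ⟨δ, hδ, fun γ hδγ hγ =>
      clip_eq_clip_iff_leAt.2 ⟨(hchain omega1).1 γ hγ.le A, h γ hδγ hγ⟩⟩
  have hlim := iter_limit (P := P) (hα := hα) (I := I) omega1_isLimit A
  split_ifs at hlim with hdeg hT hF
  · exact ⟨0, zero_lt_omega1, fun γ _ _ => hlim ▸ h₀ γ⟩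
  · obtain ⟨δ, hδ, hδT⟩ := hT
    refine ⟨δ, hδ, fun γ hδγ _ => ?_⟩
    rw [hlim, ((hchain γ).1 δ hδγ A).eq_WT hδT]
    exact LeAt.refl _ _
  · refine ⟨0, zero_lt_omega1, fun γ _ hγ => ?_⟩
    rw [hlim, hF γ hγ]
    exact LeAt.refl _ _
  · push Not at hF
    obtain ⟨δ, hδ, hδF⟩ := hF
    refine ⟨δ, hδ, fun γ hδγ _ => ?_⟩
    have hle := (h₀ γ).le_deg (le_deg_of_not_degLT hα.le hdeg)
    rw [hlim]
    refine (leAt_iff_of_le_deg (by simp) hle).2 ⟨fun e => ?_, by simp⟩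
    exact absurd (((hchain γ).1 δ hδγ A).eq_WF (W.val_inj.1 e)) hδF

lemma clip_TP_iter_omega1 (hI : ∀ A, LeAt α (I A) (TP P I A)) (A : GroundAtom L) :
    clip α (TP P (iter P α hα I omega1) A) = clip α (iter P α hα I omega1 A) := by
  obtain ⟨δ, hδ, hstab⟩ := exists_lt_omega1_of_countable (exists_iter_stable (hα := hα) hI)
  rw [← clip_TP_congr hα (hstab δ le_rfl hδ), ← iter_add_one,
    hstab (δ + 1) le_self_add (succ_lt_omega1 hδ)]

end Stabilization

/-- `I ζ =_ζ I γ` whenever `ζ < γ < α`. -/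
def Coherent (α : Ordinal) (I : Ordinal → Interp L) : Prop :=
  ∀ γ < α, ∀ ζ < γ, ∀ A, clip ζ (I ζ A) = clip ζ (I γ A)

lemma unionInterp_of_forall_deg_ne {α : Ordinal} {hα : α < omega1} {I : Ordinal → Interp L}
    {A : GroundAtom L} (h : ∀ ζ < α, deg (I ζ A) ≠ ζ) :
    unionInterp α hα (fun γ _ => I γ) A = WF α hα := by
  unfold unionInterp
  refine dif_neg fun ⟨ζ, hζ, hζA⟩ => h ζ hζ ?_
  exact (W.val_eq_F_or_T_iff (hζ.trans hα)).1 hζA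

namespace Coherent

variable {α γ ζ : Ordinal} {I : Ordinal → Interp L} {A : GroundAtom L}

lemma apply_deg_eq (hI : Coherent α I) (hγ : γ < α) (h : deg (I γ A) ≤ γ) :
    I (deg (I γ A)) A = I γ A := by
  rcases h.eq_or_lt with h | h
  · rw [h]
  · exact (eq_of_clip_eq_of_deg_le (hI γ hγ _ h A).symm le_rfl).symm

lemma deg_ne (hI : Coherent α I) (hζγ : ζ < γ) (hγ : γ < α) (hζ : deg (I ζ A) = ζ) :
    deg (I γ A) ≠ γ := by
  rw [← eq_of_clip_eq_of_deg_le (hI γ hγ ζ hζγ A) hζ.le, hζ]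
  exact hζγ.ne

variable {hα : α < omega1}

lemma unionInterp_of_deg_eq (hI : Coherent α I) (hζ : ζ < α) (h : deg (I ζ A) = ζ) :
    unionInterp α hα (fun γ _ => I γ) A = I ζ A := by
  have hex : ∃ ζ, ∃ hζ : ζ < α, (I ζ A).1 = .F ζ ∨ (I ζ A).1 = .T ζ :=
    ⟨ζ, hζ, (W.val_eq_F_or_T_iff (hζ.trans hα)).2 h⟩
  obtain ⟨hc, hcA⟩ := hex.choose_spec
  rw [W.val_eq_F_or_T_iff (hc.trans hα)] at hcA
  unfold unionInterp
  rw [dif_pos hex]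
  rcases lt_trichotomy hex.choose ζ with hlt | heq | hgt
  · exact absurd h (hI.deg_ne hlt hζ hcA)
  · exact congrFun (congrArg I heq) A
  · exact absurd hcA (hI.deg_ne hgt hc h)

lemma clip_unionInterp (hI : Coherent α I) (hγ : γ < α) (A : GroundAtom L) :
    clip γ (I γ A) = clip γ (unionInterp α hα (fun γ _ => I γ) A) := by
  by_cases h : deg (I γ A) ≤ γ
  · have hb := hI.apply_deg_eq hγ h
    rw [hI.unionInterp_of_deg_eq (h.trans_lt hγ) (by rw [hb]), hb]
  push Not at h
  rw [clip_of_lt_deg h, eq_comm, clip_of_lt_deg]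
  by_cases hs : ∃ ζ < α, deg (I ζ A) = ζ
  · obtain ⟨ζ, hζ, hζA⟩ := hs
    rw [hI.unionInterp_of_deg_eq hζ hζA, hζA]
    refine lt_of_not_ge fun hζγ => ?_
    rcases hζγ.eq_or_lt with rfl | hlt
    · exact h.ne' hζA
    · rw [← eq_of_clip_eq_of_deg_le (hI γ hγ ζ hlt A) hζA.le, hζA] at h
      exact hlt.not_gt h
  · push Not at hs
    rw [unionInterp_of_forall_deg_ne hs]
    simpa using hγ

lemma leAt_unionInterp_TP {P : Program L} (hI : Coherent α I)
    (hfix : ∀ γ < α, ∀ A, clip γ (TP P (I γ) A) = clip γ (I γ A)) (A : GroundAtom L) :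
    LeAt α (unionInterp α hα (fun γ _ => I γ) A) (TP P (unionInterp α hα fun γ _ => I γ) A) := by
  have hTP : ∀ γ < α, ∀ A,
      clip γ (TP P (unionInterp α hα fun γ _ => I γ) A) = clip γ (I γ A) := fun γ hγ A =>
    (clip_TP_congr (hγ.trans hα) (fun B => (hI.clip_unionInterp hγ B).symm) A).trans
      (hfix γ hγ A)
  by_cases hs : ∃ ζ < α, deg (I ζ A) = ζ
  · obtain ⟨ζ, hζ, hζA⟩ := hs
    rw [hI.unionInterp_of_deg_eq hζ hζA, eq_of_clip_eq_of_deg_le (hTP ζ hζ A).symm hζA.le]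
    exact LeAt.refl _ _
  · push Not at hs
    rw [unionInterp_of_forall_deg_ne hs]
    refine (leAt_iff_of_le_deg (by simp) (not_lt.1 fun hlt => ?_)).2 ⟨fun _ => rfl, by simp⟩
    refine hs _ hlt ?_
    rw [← eq_of_clip_eq_of_deg_le (hTP _ hlt A) le_rfl]

end Coherent

section Approximants

variable {P : Program L} {α γ ζ : Ordinal}

lemma approx_eq_iter (hα : α < omega1) (hcoh : Coherent α (approx P))
    (hfix : ∀ γ < α, ∀ A, clip γ (TP P (approx P γ) A) = clip γ (approx P γ A)) :
    approx P α = iter P α hα (unionInterp α hα fun γ _ => approx P γ) omega1 := by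
  rw [approx]
  exact (dif_pos hα).trans <| if_pos ⟨fun γ hγ ζ hζ => eqa_iff.2 (hcoh γ hγ ζ hζ),
    sqa_iff.2 (hcoh.leAt_unionInterp_TP hfix)⟩

theorem approx_spec (hα : α < omega1) :
    (∀ A, clip α (TP P (approx P α) A) = clip α (approx P α A)) ∧
      ∀ ζ < α, ∀ A, clip ζ (approx P ζ A) = clip ζ (approx P α A) := by
  induction α using WellFoundedLT.induction with
  | _ α ih =>
  have hcoh : Coherent α (approx P) := fun γ hγ => (ih γ hγ (hγ.trans hα)).2
  have hfix : ∀ γ < α, ∀ A, clip γ (TP P (approx P γ) A) = clip γ (approx P γ A) :=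
    fun γ hγ => (ih γ hγ (hγ.trans hα)).1
  have hU := hcoh.leAt_unionInterp_TP (hα := hα) hfix
  rw [approx_eq_iter hα hcoh hfix]
  refine ⟨clip_TP_iter_omega1 hU,
    fun ζ hζ A => (hcoh.clip_unionInterp (hα := hα) hζ A).trans ?_⟩
  simpa [iter_zero] using ((iter_chain (hα := hα) hU omega1).1 0 zero_le A).1 ζ hζ

lemma approx_coherent : Coherent omega1 (approx P) :=
  fun _ hγ => (approx_spec hγ).2

lemma depth_spec : depth P < omega1 ∧
    ∀ γ, depth P ≤ γ → γ < omega1 → ∀ A, deg (approx P γ A) ≠ γ := by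
  have hsettled : ∀ γ < omega1, Ifalse (approx P γ) γ = ∅ ∧ Itrue (approx P γ) γ = ∅ ↔
      ∀ A, deg (approx P γ A) ≠ γ := fun γ hγ => by
    simp only [Ifalse, Itrue, Set.eq_empty_iff_forall_notMem, ← forall_and, ← not_or]
    exact forall_congr' fun A => not_congr (W.val_eq_F_or_T_iff hγ)
  have hne : ∃ δ < omega1, ∀ γ, δ ≤ γ → γ < omega1 → ∀ A, deg (approx P γ A) ≠ γ := by
    refine exists_lt_omega1_of_countable fun A => ?_
    by_cases hs : ∃ ζ < omega1, deg (approx P ζ A) = ζ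
    · obtain ⟨ζ, hζ, hζA⟩ := hs
      exact ⟨ζ + 1, succ_lt_omega1 hζ, fun γ hγ hγ' =>
        approx_coherent.deg_ne (Order.add_one_le_iff.1 hγ) hγ' hζA⟩
    · push Not at hs
      exact ⟨0, zero_lt_omega1, fun γ _ => hs γ⟩
  obtain ⟨δ, hδ, h⟩ := hne
  have hmem := csInf_mem (s := {δ | δ < omega1 ∧ ∀ γ, δ ≤ γ → γ < omega1 →
    Ifalse (approx P γ) γ = ∅ ∧ Itrue (approx P γ) γ = ∅})
    ⟨δ, hδ, fun γ hδγ hγ => (hsettled γ hγ).2 (h γ hδγ hγ)⟩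
  exact ⟨hmem.1, fun γ hδγ hγ => (hsettled γ hγ).1 (hmem.2 γ hδγ hγ)⟩

end Approximants

section Model

variable {P : Program L} {e : Ordinal}

lemma clip_MP (he : depth P ≤ e) (he' : e < omega1) (A : GroundAtom L) :
    clip e (MP P A) = clip e (approx P e A) := by
  obtain ⟨hδ, hdepth⟩ := depth_spec (P := P)
  unfold MP
  split_ifs with hlow
  · rw [degLT_iff hδ.le] at hlow
    have h := approx_coherent.apply_deg_eq hδ hlow.le
    rw [← h, eq_of_clip_eq_of_deg_le (approx_coherent e he' _ (hlow.trans_le he) A) (by rw [h])]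
  · rw [clip_of_lt_deg (by simpa using he'), eq_comm, clip_of_lt_deg]
    refine lt_of_not_ge fun hle => ?_
    have h := approx_coherent.apply_deg_eq he' hle
    have hb : deg (approx P (deg (approx P e A)) A) = deg (approx P e A) := by rw [h]
    rcases lt_or_ge (deg (approx P e A)) (depth P) with hlt | hge
    · refine hlow ((degLT_iff hδ.le).2 ?_)
      rwa [← eq_of_clip_eq_of_deg_le (approx_coherent _ hδ _ hlt A) hb.le, hb]
    · exact hdepth _ hge (hle.trans_lt he') A hb

lemma eq_of_forall_clip_eq {δ : Ordinal} (hδ : δ < omega1) {v w : W}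
    (h : ∀ e, δ ≤ e → e < omega1 → clip e v = clip e w) : v = w := by
  by_contra hne
  -- otherwise `v` and `w` have degree above every countable level `e ≥ δ`, so both are `0`
  have hZ : ∀ x, (∀ e, δ ≤ e → e < omega1 → e < deg x) → x = WZ := fun x hx =>
    deg_eq_omega1_iff.1 <| (deg_le_omega1 x).antisymm <| not_lt.1 fun hlt =>
      (hx _ (le_max_left δ (deg x)) (max_lt hδ hlt)).not_ge (le_max_right _ _)
  have hlt : ∀ e, δ ≤ e → e < omega1 → e < deg v ∧ e < deg w := fun e h₁ h₂ =>
    (clip_eq_clip_iff.1 (h e h₁ h₂)).resolve_left hne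
  exact hne <| (hZ v fun e h₁ h₂ => (hlt e h₁ h₂).1).trans
    (hZ w fun e h₁ h₂ => (hlt e h₁ h₂).2).symm

theorem TP_MP (P : Program L) : TP P (MP P) = MP P := by
  funext A
  refine eq_of_forall_clip_eq (depth_spec (P := P)).1 fun e he he' => ?_
  rw [clip_TP_congr he' (clip_MP he he') A, (approx_spec he').1 A, clip_MP he he' A]

end Model

section Substitution

lemma Term.evalT_val (h : ℕ → HU L) (t : Term L) :
    (t.evalT h).1 = t.subst fun n => (h n).1 := by
  induction t with
  | var n => rfl
  | const c => rfl
  | func f ts ih => simp only [Term.evalT, Term.subst, ih]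

lemma Term.evalT_of_ground {t : Term L} (ht : t.ground) (h : ℕ → HU L) :
    t.evalT h = ⟨t, ht⟩ := by
  induction t with
  | var n => exact ht.elim
  | const c => rfl
  | func f ts ih =>
    simp only [Term.evalT, ih _ (ht _)]
    rfl

lemma Term.vars_eq_empty_of_ground {t : Term L} (ht : t.ground) : t.vars = ∅ := by
  induction t with
  | var n => exact ht.elim
  | const c => rfl
  | func f ts ih => simp [Term.vars, ih _ (ht _)]

lemma Term.evalT_congr {h h' : ℕ → HU L} {t : Term L} (hh : ∀ n ∈ t.vars, h n = h' n) :
    t.evalT h = t.evalT h' := by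
  induction t with
  | var n => exact hh n rfl
  | const c => rfl
  | func f ts ih =>
    simp only [Term.evalT, fun i => ih i fun n hn => hh n (Set.mem_iUnion.2 ⟨i, hn⟩)]
    rfl

lemma Term.evalT_subst {σ : ℕ → Term L} {h h' : ℕ → HU L} (hσ : ∀ n, (σ n).evalT h' = h n)
    (t : Term L) : (t.subst σ).evalT h' = t.evalT h := by
  induction t with
  | var n => exact hσ n
  | const c => rfl
  | func f ts ih =>
    simp only [Term.subst, Term.evalT, ih]
    rfl

lemma Term.vars_subst (σ : ℕ → Term L) (t : Term L) : (t.subst σ).vars ⊆ ⋃ n, (σ n).vars := by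
  induction t with
  | var n => exact Set.subset_iUnion (fun n => (σ n).vars) n
  | const c => exact Set.empty_subset _
  | func f ts ih => exact Set.iUnion_subset ih

lemma Formula.freeVars_subst (σ : ℕ → Term L) (φ : Formula L) :
    (φ.subst σ).freeVars ⊆ ⋃ n, (σ n).vars := by
  induction φ generalizing σ with
  | verum | falsum => exact Set.empty_subset _
  | atom p ts => exact Set.iUnion_subset fun i => Term.vars_subst σ (ts i)
  | neg φ ih => exact ih σ
  | conj φ ψ ihφ ihψ | disj φ ψ ihφ ihψ => exact Set.union_subset (ihφ σ) (ihψ σ)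
  | all v φ ih | ex v φ ih =>
    intro m ⟨hm, hmv⟩
    obtain ⟨n, hn⟩ := Set.mem_iUnion.1 (ih _ hm)
    by_cases hnv : n = v
    · subst hnv
      simp_all [Term.vars]
    · rw [Function.update_of_ne hnv] at hn
      exact Set.mem_iUnion.2 ⟨n, hn⟩

lemma Formula.eval_subst (I : Interp L) (φ : Formula L) {σ : ℕ → Term L}
    (hσv : ∀ n, (σ n).vars ⊆ {n}) {h h' : ℕ → HU L} (hσ : ∀ n, (σ n).evalT h' = h n) :
    (φ.subst σ).eval I h' = φ.eval I h := by
  induction φ generalizing σ h h' with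
  | verum | falsum => rfl
  | atom p ts => simp only [Formula.subst, Formula.eval, Term.evalT_subst hσ]
  | neg φ ih => simp only [Formula.subst, Formula.eval, ih hσv hσ]
  | conj φ ψ ihφ ihψ | disj φ ψ ihφ ihψ =>
    simp only [Formula.subst, Formula.eval, ihφ hσv hσ, ihψ hσv hσ]
  | all v φ ih | ex v φ ih =>
    simp only [Formula.subst, Formula.eval]
    congr 1
    ext w
    refine exists_congr fun u => Eq.congr_left (ih (fun n => ?_) fun n => ?_)
    · by_cases hnv : n = v
      · subst hnv
        simp [Term.vars]
      · simpa [Function.update_of_ne hnv] using hσv n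
    · by_cases hnv : n = v
      · subst hnv
        simp [Term.evalT]
      · rw [Function.update_of_ne hnv, Function.update_of_ne hnv, ← hσ n]
        exact Term.evalT_congr fun m hm => Function.update_of_ne (hσv n hm ▸ hnv) _ _

lemma Formula.evalClosed_subst (I : Interp L) (φ : Formula L) (h : ℕ → HU L) :
    (φ.subst fun n => (h n).1).evalClosed I = φ.eval I h :=
  φ.eval_subst I (fun n => by simp [Term.vars_eq_empty_of_ground (h n).2])
    fun n => Term.evalT_of_ground (h n).2 _

lemma mem_groundInstances {P : Program L} {r : Rule L} (hr : r ∈ P.rules) (h : ℕ → HU L) :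
    ((⟨r.headPred, fun i => (r.headArgs i).evalT h⟩ : GroundAtom L),
      r.body.subst fun n => (h n).1) ∈ groundInstances P := by
  have hg : ∀ i, ((r.headArgs i).subst fun n => (h n).1).ground := fun i =>
    Term.evalT_val h (r.headArgs i) ▸ ((r.headArgs i).evalT h).2
  refine ⟨r, hr, _, ⟨hg, ?_⟩, rfl, Set.subset_eq_empty (Formula.freeVars_subst _ _) ?_⟩
  · show (⟨_, _⟩ : GroundAtom L) = ⟨_, _⟩
    congr with i
    exact Subtype.ext (Term.evalT_val h _)
  · simp [Term.vars_eq_empty_of_ground (h _).2]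

end Substitution

/-- `M_P` is a model of `P`. -/
theorem MP_isModel {L : Language} (P : Program L) : isModel (MP P) P := by
  intro r hr h
  calc r.body.eval (MP P) h = (r.body.subst fun n => (h n).1).evalClosed (MP P) :=
        (Formula.evalClosed_subst _ _ _).symm
    _ ≤ TP P (MP P) ⟨r.headPred, fun i => (r.headArgs i).evalT h⟩ :=
        evalClosed_le_TP (mem_groundInstances hr h)
    _ = r.headAtom.eval (MP P) h := by rw [TP_MP]; rfl

end ILP
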